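/- arXiv:2211.17150 — 3 statements merged into one kernel-verified Lean document; each statement's English description precedes it below -/
import Mathlib

section
/- Let V be a finite set and let G_1, ..., G_k be simple graphs, all on the same vertex set V, with edge sets E_1, ..., E_k. Let T be a tree with exactly k edges, together with a bijective labeling of its edges by {1, ..., k}. Then for every subset W ⊆ V with |W| > α(G_1) + α(G_2) + ... + α(G_k) there exists a map h from the vertex set of T to W (a homomorphic copy of T, not necessarily injective) such that for every i ∈ {1, ..., k}, if the edge of T labeled i has endpoints u and v, then {h(u), h(v)} is an edge of G_i. -/
/-!
The statement holds for finite forests, by induction on the number of edges. Let `x` be a leaf,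
joined to `y` by the edge labelled `j`. The vertices of `W` without a `G j`-neighbour in `W`
are independent in `G j`, so the set `W'` of those with such a neighbour has more than
`∑_{i ≠ j} α(G i)` elements. Map the forest minus the edge `xy` into `W'` by induction, then
send `x` to a `G j`-neighbour in `W` of the image of `y`.
-/

/-- The independence number of a finite simple graph: the largest size of a set of
vertices inducing no edges. -/
noncomputable def indepNum {V : Type*} [Fintype V] (G : SimpleGraph V) : ℕ :=
  sSup {m | ∃ s : Finset V, (∀ x ∈ s, ∀ y ∈ s, ¬ G.Adj x y) ∧ s.card = m}

theorem card_le_indepNum {V : Type*} [Fintype V] (G : SimpleGraph V) {s : Finset V}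
    (hs : ∀ x ∈ s, ∀ y ∈ s, ¬ G.Adj x y) : s.card ≤ indepNum G :=
  le_csSup ⟨Fintype.card V, by rintro m ⟨t, -, rfl⟩; exact t.card_le_univ⟩ ⟨s, hs, rfl⟩

theorem card_le_indepNum_add_card_filter_exists_adj {V : Type*} [Fintype V] [DecidableEq V]
    (G : SimpleGraph V) [DecidableRel G.Adj] (W : Finset V) :
    W.card ≤ indepNum G + (W.filter fun w => ∃ z ∈ W, G.Adj w z).card := by
  have hindep : (W.filter fun w => ¬ ∃ z ∈ W, G.Adj w z).card ≤ indepNum G :=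
    card_le_indepNum G fun u hu v hv huv =>
      (Finset.mem_filter.mp hu).2 ⟨v, (Finset.mem_filter.mp hv).1, huv⟩
  rw [← Finset.card_filter_add_card_filter_not (s := W) fun w => ∃ z ∈ W, G.Adj w z]
  omega

namespace SimpleGraph

theorem IsAcyclic.exists_adj_forall_adj_eq {α : Type*} {T : SimpleGraph α}
    [Finite T.edgeSet] (hT : T.IsAcyclic) (hne : T ≠ ⊥) :
    ∃ x y, T.Adj x y ∧ ∀ z, T.Adj x z → z = y := by
  obtain ⟨a, b, hab⟩ := ne_bot_iff_exists_adj.mp hne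
  have : Nonempty α := ⟨a⟩
  obtain ⟨u, v, p, hp, hlongest⟩ := Walk.exists_isPath_forall_isPath_length_le_length T
  have hnil : ¬ p.Nil := fun hnil => by
    simpa [Walk.length_eq_zero_iff.mpr hnil] using
      hlongest a b (.cons hab .nil) (Walk.IsPath.mk' (by simp [hab.ne]))
  refine ⟨u, p.snd, p.adj_snd hnil, fun w huw => ?_⟩
  by_contra hw
  have hwp : w ∉ p.support := fun hwp => hw (hT.eq_snd_of_adj_start hp huw hwp)
  simpa using hlongest w v (.cons huw.symm p) (hp.cons hwp)

theorem eq_of_mem_edgeSet_of_forall_adj_eq {α : Type*} {T : SimpleGraph α}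
    {x y : α} (hleaf : ∀ z, T.Adj x z → z = y) {e : Sym2 α} (he : e ∈ T.edgeSet)
    (hx : x ∈ e) : e = s(x, y) := by
  rw [← Sym2.other_spec hx] at he ⊢
  rw [hleaf _ ((mem_edgeSet T).mp he)]

def labelingDeleteEdge {α ι : Type*} {T : SimpleGraph α} (ℓ : ι ≃ T.edgeSet) (j : ι) :
    {i // i ≠ j} ≃ (T.deleteEdges {(ℓ j : Sym2 α)}).edgeSet where
  toFun i := ⟨ℓ i, by simp [edgeSet_deleteEdges, Subtype.ext_iff.not.mp (ℓ.injective.ne i.2)]⟩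
  invFun e :=
    have he := (edgeSet_deleteEdges (G := T) _).subst (motive := (↑e ∈ ·)) e.2
    ⟨ℓ.symm ⟨e, he.1⟩, fun h => he.2 (by simp [← h])⟩
  left_inv i := by simp
  right_inv e := by simp

end SimpleGraph

theorem exists_labeled_hom_of_isAcyclic {V α ι : Type*} [Fintype V] [Fintype ι]
    {T : SimpleGraph α} (hT : T.IsAcyclic) (ℓ : ι ≃ T.edgeSet) (G : ι → SimpleGraph V)
    (W : Finset V) (hW : ∑ i, indepNum (G i) < W.card) :
    ∃ h : α → V, (∀ a, h a ∈ W) ∧ ∀ i, Sym2.map h (ℓ i) ∈ (G i).edgeSet := by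
  classical
  induction hk : Fintype.card ι generalizing ι T W with
  | zero =>
    have : IsEmpty ι := Fintype.card_eq_zero_iff.mp hk
    obtain ⟨w, hw⟩ := Finset.card_pos.mp (by simpa using hW)
    exact ⟨fun _ => w, fun _ => hw, isEmptyElim⟩
  | succ k ih =>
    obtain ⟨i₀⟩ := Fintype.card_pos_iff.mp (by rw [hk]; exact k.succ_pos)
    have : Finite T.edgeSet := .of_equiv ι ℓ
    obtain ⟨x, y, hxy, hleaf⟩ :=
      hT.exists_adj_forall_adj_eq (SimpleGraph.edgeSet_nonempty.mp ⟨ℓ i₀, (ℓ i₀).2⟩)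
    set j := ℓ.symm ⟨s(x, y), hxy⟩
    have hj : (ℓ j : Sym2 α) = s(x, y) := by simp [j]
    have hcut := card_le_indepNum_add_card_filter_exists_adj (G j) W
    set W' := W.filter fun w => ∃ z ∈ W, (G j).Adj w z
    have hW' : ∑ i : {i // i ≠ j}, indepNum (G i) < W'.card := by
      rw [Fintype.sum_eq_add_sum_subtype_ne _ j] at hW
      omega
    obtain ⟨h', hh'W, hh'G⟩ := ih (hT.anti (SimpleGraph.deleteEdges_le _))
      (SimpleGraph.labelingDeleteEdge ℓ j) (G ·) W' hW' (by simp [hk])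
    obtain ⟨z, hzW, hz⟩ := (Finset.mem_filter.mp (hh'W y)).2
    refine ⟨Function.update h' x z, fun a => ?_, fun i => ?_⟩
    · rcases eq_or_ne a x with rfl | ha
      · simpa
      · simpa [ha] using Finset.filter_subset _ _ (hh'W a)
    · rcases eq_or_ne i j with rfl | hi
      · simpa [hj, hxy.ne'] using hz.symm
      · have hx : x ∉ (ℓ i : Sym2 α) := fun hx => hi <| ℓ.injective <| Subtype.ext <|
          (SimpleGraph.eq_of_mem_edgeSet_of_forall_adj_eq hleaf (ℓ i).2 hx).trans hj.symm
        rw [Sym2.map_congr fun a ha => Function.update_of_ne (ne_of_mem_of_not_mem ha hx) _ _]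
        exact hh'G ⟨i, hi⟩

theorem cutting_corners_tree_lemma_general {V α : Type*} [Fintype V] {k : ℕ}
    (G : Fin k → SimpleGraph V) (T : SimpleGraph α) (hT : T.IsTree)
    (ℓ : Fin k ≃ T.edgeSet) (W : Finset V)
    (hW : (∑ i, indepNum (G i)) < W.card) :
    ∃ h : α → V, (∀ a, h a ∈ W) ∧
      ∀ i : Fin k, Sym2.map h ((ℓ i : Sym2 α)) ∈ (G i).edgeSet :=
  exists_labeled_hom_of_isAcyclic hT.isAcyclic ℓ G W hW

/-- If `G 1, …, G k` are simple graphs on a common vertex set `V`, `T` is a tree whose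
edges are bijectively labeled by `Fin k`, then any `W ⊆ V` with
`|W| > α(G 1) + ⋯ + α(G k)` contains a homomorphic copy `h` of `T` such that the image
of the edge labeled `i` is an edge of `G i`. -/
theorem cutting_corners_tree_lemma {V α : Type*} [Fintype V] [Fintype α] {k : ℕ}
    (G : Fin k → SimpleGraph V) (T : SimpleGraph α) (hT : T.IsTree)
    (ℓ : Fin k ≃ T.edgeSet) (W : Finset V)
    (hW : (∑ i, indepNum (G i)) < W.card) :
    ∃ h : α → V, (∀ a, h a ∈ W) ∧
      ∀ i : Fin k, Sym2.map h ((ℓ i : Sym2 α)) ∈ (G i).edgeSet :=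
  cutting_corners_tree_lemma_general G T hT ℓ W hW
end

section
/- Let r < n be positive integers and let F be a family of r-element subsets of [n] = {1, ..., n}. Then for every partition of n and r into k non-negative summands n = n_1 + ... + n_k and r = r_1 + ... + r_k, there is a partition of [n] into k pairwise disjoint subsets [n] = N_1 ∪ ... ∪ N_k such that: (i) |N_i| = n_i for all i ∈ {1, ..., k}, and (ii) the subfamily F' = {F ∈ F : |F ∩ N_i| = r_i for all i ∈ {1, ..., k}} satisfies |F'| · C(n, r) ≥ |F| · C(n_1, r_1) ⋯ C(n_k, r_k), where C(a, b) denotes the binomial coefficient. -/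
/-!
Fix one partition `P` of `[n]` with part sizes `nᵢ`, given as the fibres of a colouring
`p : [n] → [k]`, and move it by a uniformly random permutation `σ`. For each `r`-set `A`, the
set `σ • A` is uniformly distributed over the `r`-sets, so `A` meets the parts of `σ⁻¹ • P` in
exactly `rᵢ` elements with probability `∏ C(nᵢ, rᵢ) / C(n, r)`. Some `σ` does at least as well
as the average over `F`.
-/

open Finset MulAction Equiv
open scoped Pointwise

namespace MulAction

variable {G α : Type*} [Group G] [Fintype G] [MulAction G α] [DecidableEq α]

theorem card_filter_smul_eq {a b : α} (hb : b ∈ orbit G a) :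
    #{g : G | g • a = b} = Nat.card (stabilizer G a) := by
  obtain ⟨h, rfl⟩ := hb
  rw [← Fintype.card_subtype, ← Nat.card_eq_fintype_card]
  refine Nat.card_congr ((Equiv.mulLeft h⁻¹).subtypeEquiv fun g => ?_)
  simp [mem_stabilizer_iff, mul_smul, inv_smul_eq_iff]

theorem card_filter_smul_mem_mul_ncard_orbit {a : α} {S : Finset α} (hS : ↑S ⊆ orbit G a) :
    #{g : G | g • a ∈ S} * (orbit G a).ncard = #S * Fintype.card G := by
  have hfiber : ∀ b ∈ S, #{g ∈ {g : G | g • a ∈ S} | g • a = b} = Nat.card (stabilizer G a) :=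
    fun b hb => by
      rw [filter_filter, ← card_filter_smul_eq (hS hb)]
      congr 1
      exact filter_congr fun g _ => ⟨And.right, fun h => ⟨h ▸ hb, h⟩⟩
  rw [card_eq_sum_card_fiberwise (s := {g : G | g • a ∈ S}) (t := S) (f := (· • a))
      fun g hg => (mem_filter.1 hg).2, sum_congr rfl hfiber, sum_const, smul_eq_mul, mul_assoc,
    ← index_stabilizer, Subgroup.card_mul_index, Nat.card_eq_fintype_card]

theorem exists_card_mul_card_le_card_filter_smul_mem_mul_ncard {F S : Finset α} {O : Set α}
    (hF : ∀ a ∈ F, orbit G a = O) (hS : ↑S ⊆ O) :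
    ∃ g : G, #F * #S ≤ #{a ∈ F | g • a ∈ S} * O.ncard := by
  have hsum : ∑ g : G, #{a ∈ F | g • a ∈ S} * O.ncard = ∑ _g : G, #F * #S :=
    calc ∑ g : G, #{a ∈ F | g • a ∈ S} * O.ncard
        = ∑ a ∈ F, #{g : G | g • a ∈ S} * O.ncard := by
          rw [← sum_mul, ← sum_mul]
          exact congrArg (· * _) (sum_card_bipartiteAbove_eq_sum_card_bipartiteBelow _)
      _ = ∑ _a ∈ F, #S * Fintype.card G := sum_congr rfl fun a ha => by
          rw [← hF a ha] at hS ⊢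
          exact card_filter_smul_mem_mul_ncard_orbit hS
      _ = ∑ _g : G, #F * #S := by simp only [sum_const, card_univ, smul_eq_mul]; ring
  obtain ⟨g, -, hg⟩ := exists_le_of_sum_le univ_nonempty hsum.ge
  exact ⟨g, hg⟩

end MulAction

theorem Equiv.Perm.orbit_finset {α : Type*} [DecidableEq α] (A : Finset α) :
    orbit (Perm α) A = Set.powersetCard α #A := by
  ext B
  refine ⟨fun ⟨σ, hσ⟩ => hσ ▸ card_smul_finset σ A, fun hB => ?_⟩
  obtain ⟨σ, hσ⟩ := (Set.powersetCard.isPretransitive (α := α) (n := #A)).exists_smul_eq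
    ⟨A, rfl⟩ ⟨B, hB⟩
  exact ⟨σ, by simpa using congrArg Subtype.val hσ⟩

theorem Equiv.Perm.card_filter_smul_finset {α : Type*} [DecidableEq α] (σ : Perm α)
    (A : Finset α) (q : α → Prop) [DecidablePred q] :
    #{x ∈ σ • A | q x} = #{x ∈ A | q (σ x)} := by
  rw [smul_finset_def, filter_image, card_image_of_injective _ (MulAction.injective σ)]
  rfl

section Colouring

variable {α ι : Type*} [Fintype ι] [DecidableEq ι]

theorem exists_card_fiber_eq [Fintype α] (m : ι → ℕ) (h : ∑ i, m i = Fintype.card α) :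
    ∃ p : α → ι, ∀ i, #{x | p x = i} = m i := by
  let e : α ≃ Σ i, Fin (m i) := Fintype.equivOfCardEq (by simp [h])
  refine ⟨fun x => (e x).1, fun i => ?_⟩
  rw [← Fintype.card_subtype, ← Fintype.card_fin (m i)]
  exact Fintype.card_congr ((e.subtypeEquiv fun _ => Iff.rfl).trans (Equiv.sigmaSubtype i))

variable [DecidableEq α]

theorem filter_biUnion_eq_of_forall_mem {p : α → ι} {t : ι → Finset α}
    (ht : ∀ j, ∀ x ∈ t j, p x = j) (i : ι) : {x ∈ univ.biUnion t | p x = i} = t i := by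
  ext x
  simp only [mem_filter, mem_biUnion, mem_univ, true_and]
  exact ⟨fun ⟨⟨j, hj⟩, hi⟩ => (ht j x hj).symm.trans hi ▸ hj, fun hx => ⟨⟨i, hx⟩, ht i x hx⟩⟩

theorem card_filter_forall_card_filter_eq [Fintype α] (p : α → ι) (r : ι → ℕ) :
    #{B : Finset α | ∀ i, #{x ∈ B | p x = i} = r i} = ∏ i, (#{x | p x = i}).choose (r i) := by
  simp_rw [← card_powersetCard, ← Fintype.card_piFinset]
  refine card_bij' (fun B _ i => {x ∈ B | p x = i}) (fun t _ => univ.biUnion t) ?_ ?_ ?_ ?_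
  · intro B hB
    simp only [mem_filter, mem_univ, true_and] at hB
    simp only [Fintype.mem_piFinset, mem_powersetCard]
    exact fun i => ⟨filter_subset_filter _ (subset_univ B), hB i⟩
  · intro t ht
    simp only [Fintype.mem_piFinset, mem_powersetCard, subset_iff, mem_filter, mem_univ,
      true_and] at ht
    simp only [mem_filter, mem_univ, true_and]
    intro i
    rw [filter_biUnion_eq_of_forall_mem fun j => (ht j).1, (ht i).2]
  · intro B _
    ext x
    simp
  · intro t ht
    simp only [Fintype.mem_piFinset, mem_powersetCard, subset_iff, mem_filter, mem_univ,
      true_and] at ht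
    exact funext (filter_biUnion_eq_of_forall_mem fun j => (ht j).1)

end Colouring

theorem cutting_corners_partition_general {n r k : ℕ}
    (F : Finset (Finset (Fin n))) (hF : ∀ A ∈ F, A.card = r)
    (nn rr : Fin k → ℕ) (hn : ∑ i, nn i = n) (hrsum : ∑ i, rr i = r) :
    ∃ N : Fin k → Finset (Fin n),
      (∀ i j, i ≠ j → Disjoint (N i) (N j)) ∧
      (Finset.univ.biUnion N = Finset.univ) ∧
      (∀ i, (N i).card = nn i) ∧
      F.card * ∏ i, Nat.choose (nn i) (rr i) ≤
        (F.filter fun A => ∀ i, (A ∩ N i).card = rr i).card * Nat.choose n r := by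
  obtain ⟨p, hp⟩ := exists_card_fiber_eq (α := Fin n) nn (by simpa using hn)
  set good : Finset (Finset (Fin n)) := {B | ∀ i, #{x ∈ B | p x = i} = rr i}
  have hgood : ↑good ⊆ Set.powersetCard (Fin n) r := fun B hB => by
    simp only [coe_filter, mem_univ, true_and, Set.mem_ofPred_eq, good] at hB
    rw [Set.powersetCard.mem_iff,
      card_eq_sum_card_fiberwise (f := p) (t := univ) fun _ _ => mem_univ _, ← hrsum,
      sum_congr rfl fun i _ => hB i]
  obtain ⟨σ, hσ⟩ := exists_card_mul_card_le_card_filter_smul_mem_mul_ncard (G := Perm (Fin n))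
    (fun A hA => by rw [Perm.orbit_finset, hF A hA]) hgood
  set N : Fin k → Finset (Fin n) := fun i => {x | p (σ x) = i}
  have hN : ∀ A i, A ∩ N i = {x ∈ A | p (σ x) = i} := fun A i => by
    rw [inter_filter, inter_univ]
  refine ⟨N, fun i j hij => disjoint_filter.2 fun x _ hi hj => hij (hi ▸ hj),
    eq_univ_of_forall fun x => mem_biUnion.2 ⟨p (σ x), mem_univ _, by simp [N]⟩, fun i => ?_, ?_⟩
  · rw [← hp i, ← Perm.card_filter_smul_finset σ univ (p · = i), smul_finset_univ]
  · rw [← Nat.card_coe_set_eq, Set.powersetCard.card, Nat.card_eq_fintype_card,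
      Fintype.card_fin] at hσ
    simp only [good, mem_filter, mem_univ, true_and, Perm.card_filter_smul_finset] at hσ
    simp only [hN, ← hp, ← card_filter_forall_card_filter_eq]
    convert hσ

/-- Given a family `F` of `r`-element subsets of `[n]` and partitions
`n = n₁ + ⋯ + n_k`, `r = r₁ + ⋯ + r_k` into non-negative summands, there is a
partition `[n] = N₁ ∪ ⋯ ∪ N_k` with `|N i| = n i` such that the subfamily
`F' = {F ∈ F : |F ∩ N i| = r i for all i}` satisfies
`|F'| · C(n,r) ≥ |F| · C(n₁,r₁) ⋯ C(n_k,r_k)`. -/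
theorem cutting_corners_partition {n r k : ℕ} (hr : 0 < r) (hrn : r < n)
    (F : Finset (Finset (Fin n))) (hF : ∀ A ∈ F, A.card = r)
    (nn rr : Fin k → ℕ) (hn : ∑ i, nn i = n) (hrsum : ∑ i, rr i = r) :
    ∃ N : Fin k → Finset (Fin n),
      (∀ i j, i ≠ j → Disjoint (N i) (N j)) ∧
      (Finset.univ.biUnion N = Finset.univ) ∧
      (∀ i, (N i).card = nn i) ∧
      F.card * ∏ i, Nat.choose (nn i) (rr i) ≤
        (F.filter fun A => ∀ i, (A ∩ N i).card = rr i).card * Nat.choose n r :=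
  cutting_corners_partition_general F hF nn rr hn hrsum
end

section
/- Let N₁ ⊂ ℝ^{d₁} and N₂ ⊂ ℝ^{d₂} be finite sets and put m = |N₂|. Let V₁ ⊂ ℝ^{n₁} and V₂ ⊂ ℝ^{n₂} be finite sets, and let W be a subset of V₁ × V₂ ⊆ ℝ^{n₁} × ℝ^{n₂} = ℝ^{n₁ + n₂} (with the Euclidean metric) containing no isometric copy of N₁ × N₂. Then |W| ≤ |V₁| · α(V₂, N₂) + α(V₁, N₁) · |V₂|^m. -/
/-- The point of `ℝ^{d₁+d₂}` obtained by concatenating `x ∈ ℝ^{d₁}` and `y ∈ ℝ^{d₂}`. -/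
noncomputable def prodPoint {d₁ d₂ : ℕ} (x : EuclideanSpace ℝ (Fin d₁))
    (y : EuclideanSpace ℝ (Fin d₂)) : EuclideanSpace ℝ (Fin (d₁ + d₂)) :=
  WithLp.toLp 2 (fun i => Fin.append (fun j => x j) (fun j => y j) i)

/-- `M'` is an isometric copy of `M` in `ℝⁿ` (Euclidean metric): it is the image of a
distance-preserving map defined on `M`. -/
def IsIsomCopy {d n : ℕ} (M : Set (EuclideanSpace ℝ (Fin d)))
    (M' : Set (EuclideanSpace ℝ (Fin n))) : Prop :=
  ∃ f : EuclideanSpace ℝ (Fin d) → EuclideanSpace ℝ (Fin n),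
    (∀ x ∈ M, ∀ y ∈ M, dist (f x) (f y) = dist x y) ∧ M' = f '' M

/-- `alphaM V M`: the largest size of a subset of the finite set `V ⊂ ℝⁿ` containing
no isometric copy of `M`. -/
noncomputable def alphaM {d n : ℕ} (V : Finset (EuclideanSpace ℝ (Fin n)))
    (M : Set (EuclideanSpace ℝ (Fin d))) : ℕ :=
  sSup {m | ∃ W ⊆ V, (¬ ∃ M' ⊆ (W : Set (EuclideanSpace ℝ (Fin n))), IsIsomCopy M M') ∧
    W.card = m}

/-!
Split each fibre `W_{v₁} = {v₂ | (v₁, v₂) ∈ W}` into the points lying on an isometric copy of `N₂`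
inside the fibre and the rest. The rest contains no copy of `N₂`, so it has at most `α(V₂, N₂)`
points. A point on a copy is the value at a fixed `y₀ ∈ N₂` of a map `G : N₂ → W_{v₁}` whose range
is a copy of `N₂`, so it suffices to count the pairs `(v₁, G)`. There are at most `|V₂|^m` maps
`G`, and for a fixed `G` the admissible `v₁` form a set `A` with `A × range G ⊆ W`; since
`W` contains no copy of `N₁ × N₂`, `A` contains no copy of `N₁`, so `|A| ≤ α(V₁, N₁)`.
-/

local notation "E" n => EuclideanSpace ℝ (Fin n)

lemma finAddEquivProd_prodPoint {a b : ℕ} (x : E a) (y : E b) :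
    EuclideanSpace.finAddEquivProd (prodPoint x y) = (x, y) := by
  ext j <;> simp [prodPoint]

lemma dist_prodPoint {a b : ℕ} (x x' : E a) (y y' : E b) :
    dist (prodPoint x y) (prodPoint x' y') = Real.sqrt (dist x x' ^ 2 + dist y y' ^ 2) := by
  simp only [EuclideanSpace.dist_eq, Real.sq_sqrt (Finset.sum_nonneg fun _ _ => sq_nonneg _),
    Fin.sum_univ_add, prodPoint, Fin.append_left, Fin.append_right]

lemma card_le_alphaM {d n : ℕ} {V S : Finset (E n)} {M : Set (E d)} (hSV : S ⊆ V)
    (hS : ¬ ∃ M' ⊆ (S : Set (E n)), IsIsomCopy M M') : S.card ≤ alphaM V M :=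
  le_csSup ⟨V.card, by rintro _ ⟨T, hTV, -, rfl⟩; exact Finset.card_le_card hTV⟩ ⟨S, hSV, hS, rfl⟩

lemma isIsomCopy_empty {d n : ℕ} : IsIsomCopy (∅ : Set (E d)) (∅ : Set (E n)) :=
  ⟨0, by simp, by simp⟩

lemma IsIsomCopy.image2_prodPoint {d₁ d₂ n₁ n₂ : ℕ} {M₁ : Set (E d₁)} {M₂ : Set (E d₂)}
    {S₁ : Set (E n₁)} {S₂ : Set (E n₂)} (h₁ : IsIsomCopy M₁ S₁) (h₂ : IsIsomCopy M₂ S₂) :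
    IsIsomCopy (Set.image2 prodPoint M₁ M₂) (Set.image2 prodPoint S₁ S₂) := by
  obtain ⟨f₁, hf₁, rfl⟩ := h₁
  obtain ⟨f₂, hf₂, rfl⟩ := h₂
  let F : (E (d₁ + d₂)) → E (n₁ + n₂) := fun z =>
    prodPoint (f₁ (EuclideanSpace.finAddEquivProd z).1) (f₂ (EuclideanSpace.finAddEquivProd z).2)
  have hF : ∀ x y, F (prodPoint x y) = prodPoint (f₁ x) (f₂ y) := fun x y => by
    simp only [F, finAddEquivProd_prodPoint]
  refine ⟨F, ?_, ?_⟩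
  · rintro _ ⟨x, hx, y, hy, rfl⟩ _ ⟨x', hx', y', hy', rfl⟩
    rw [hF, hF, dist_prodPoint, dist_prodPoint, hf₁ x hx x' hx', hf₂ y hy y' hy']
  · rw [Set.image_image2, Set.image2_image_left, Set.image2_image_right]
    simp only [hF]

lemma card_le_alphaM_of_image2_subset {d₁ d₂ n₁ n₂ : ℕ} {N₁ : Set (E d₁)} {N₂ : Set (E d₂)}
    {V₁ A : Finset (E n₁)} {S : Set (E n₂)} {W : Set (E (n₁ + n₂))}
    (hno : ¬ ∃ M' ⊆ W, IsIsomCopy (Set.image2 prodPoint N₁ N₂) M') (hS : IsIsomCopy N₂ S)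
    (hAV : A ⊆ V₁) (hAS : Set.image2 prodPoint (A : Set (E n₁)) S ⊆ W) :
    A.card ≤ alphaM V₁ N₁ :=
  card_le_alphaM hAV fun ⟨_, hM'A, hM'⟩ =>
    hno ⟨_, (Set.image2_subset_right hM'A).trans hAS, hM'.image2_prodPoint hS⟩

open Classical in
noncomputable def copyMaps {d n : ℕ} (N : Finset (E d)) (S : Finset (E n)) : Finset (N → E n) :=
  {G ∈ Fintype.piFinset fun _ => S | IsIsomCopy (N : Set (E d)) (Set.range G)}

section CopyMaps

variable {d n : ℕ} {N : Finset (E d)} {S T : Finset (E n)}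

lemma mem_copyMaps {G : N → E n} :
    G ∈ copyMaps N S ↔ (∀ y, G y ∈ S) ∧ IsIsomCopy (N : Set (E d)) (Set.range G) := by
  simp [copyMaps]

lemma copyMaps_mono (h : S ⊆ T) : copyMaps N S ⊆ copyMaps N T := fun _ hG =>
  mem_copyMaps.2 ⟨fun y => h ((mem_copyMaps.1 hG).1 y), (mem_copyMaps.1 hG).2⟩

lemma card_copyMaps_le : (copyMaps N S).card ≤ S.card ^ N.card := by
  classical
  exact (Finset.card_filter_le _ _).trans (by simp)

lemma card_le_alphaM_add_card_copyMaps {V : Finset (E n)} (hN : N.Nonempty) (hSV : S ⊆ V) :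
    S.card ≤ alphaM V (N : Set (E d)) + (copyMaps N S).card := by
  classical
  obtain ⟨y₀, hy₀⟩ := hN
  set onCopy := (copyMaps N S).image fun G => G ⟨y₀, hy₀⟩
  have hfree : ¬ ∃ M' ⊆ ((S \ onCopy : Finset (E n)) : Set (E n)),
      IsIsomCopy (N : Set (E d)) M' := by
    rintro ⟨_, hM', f, hf, rfl⟩
    have hG : (fun y : N => f y) ∈ copyMaps N S := by
      refine mem_copyMaps.2 ⟨fun y => ?_, ⟨f, hf, ?_⟩⟩
      · exact (Finset.mem_sdiff.1 (hM' ⟨y, y.2, rfl⟩)).1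
      · ext; simp
    exact (Finset.mem_sdiff.1 (hM' ⟨y₀, hy₀, rfl⟩)).2 (Finset.mem_image_of_mem _ hG)
  calc S.card ≤ (S \ onCopy).card + onCopy.card := Finset.card_le_card_sdiff_add_card
    _ ≤ alphaM V (N : Set (E d)) + (copyMaps N S).card :=
      add_le_add (card_le_alphaM (Finset.sdiff_subset.trans hSV) hfree) Finset.card_image_le

end CopyMaps

open Classical in
noncomputable def fiber {n₁ n₂ : ℕ} (W : Finset (E (n₁ + n₂))) (V₂ : Finset (E n₂)) (v₁ : E n₁) :
    Finset (E n₂) :=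
  {v₂ ∈ V₂ | prodPoint v₁ v₂ ∈ W}

section Fiber

variable {d₁ d₂ n₁ n₂ : ℕ} {V₁ : Finset (E n₁)} {V₂ : Finset (E n₂)} {W : Finset (E (n₁ + n₂))}

lemma mem_fiber {v₁ : E n₁} {v₂ : E n₂} : v₂ ∈ fiber W V₂ v₁ ↔ v₂ ∈ V₂ ∧ prodPoint v₁ v₂ ∈ W := by
  simp [fiber]

lemma fiber_subset (v₁ : E n₁) : fiber W V₂ v₁ ⊆ V₂ := fun _ h => (mem_fiber.1 h).1

lemma card_le_sum_card_fiber
    (hW : (W : Set (E (n₁ + n₂))) ⊆ Set.image2 prodPoint (V₁ : Set (E n₁)) (V₂ : Set (E n₂))) :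
    W.card ≤ ∑ v₁ ∈ V₁, (fiber W V₂ v₁).card := by
  classical
  calc W.card ≤ (V₁.biUnion fun v₁ => (fiber W V₂ v₁).image (prodPoint v₁)).card := by
        refine Finset.card_le_card fun w hw => ?_
        obtain ⟨v₁, hv₁, v₂, hv₂, rfl⟩ := hW hw
        exact Finset.mem_biUnion.2 ⟨v₁, hv₁, Finset.mem_image_of_mem _ (mem_fiber.2 ⟨hv₂, hw⟩)⟩
    _ ≤ ∑ v₁ ∈ V₁, ((fiber W V₂ v₁).image (prodPoint v₁)).card := Finset.card_biUnion_le
    _ ≤ ∑ v₁ ∈ V₁, (fiber W V₂ v₁).card := Finset.sum_le_sum fun _ _ => Finset.card_image_le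

lemma sum_card_copyMaps_fiber_le {N₁ : Finset (E d₁)} {N₂ : Finset (E d₂)}
    (hno : ¬ ∃ M' ⊆ (W : Set (E (n₁ + n₂))),
      IsIsomCopy (Set.image2 prodPoint (N₁ : Set (E d₁)) (N₂ : Set (E d₂))) M') :
    ∑ v₁ ∈ V₁, (copyMaps N₂ (fiber W V₂ v₁)).card ≤
      alphaM V₁ (N₁ : Set (E d₁)) * V₂.card ^ N₂.card := by
  classical
  let r : (E n₁) → (N₂ → E n₂) → Prop := fun v₁ G => ∀ y, G y ∈ fiber W V₂ v₁
  calc ∑ v₁ ∈ V₁, (copyMaps N₂ (fiber W V₂ v₁)).card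
      ≤ ∑ v₁ ∈ V₁, ((copyMaps N₂ V₂).bipartiteAbove r v₁).card := by
        refine Finset.sum_le_sum fun v₁ _ => Finset.card_le_card fun G hG => ?_
        exact (Finset.mem_bipartiteAbove r).2
          ⟨copyMaps_mono (fiber_subset v₁) hG, (mem_copyMaps.1 hG).1⟩
    _ = ∑ G ∈ copyMaps N₂ V₂, (V₁.bipartiteBelow r G).card :=
        Finset.sum_card_bipartiteAbove_eq_sum_card_bipartiteBelow r
    _ ≤ ∑ _G ∈ copyMaps N₂ V₂, alphaM V₁ (N₁ : Set (E d₁)) := by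
        refine Finset.sum_le_sum fun G hG => card_le_alphaM_of_image2_subset hno
          (mem_copyMaps.1 hG).2 (Finset.filter_subset _ _) ?_
        rintro _ ⟨v₁, hv₁, _, ⟨y, rfl⟩, rfl⟩
        exact (mem_fiber.1 (((Finset.mem_bipartiteBelow r).1 hv₁).2 y)).2
    _ ≤ alphaM V₁ (N₁ : Set (E d₁)) * V₂.card ^ N₂.card := by
        rw [Finset.sum_const, smul_eq_mul, mul_comm]
        exact Nat.mul_le_mul_left _ card_copyMaps_le

end Fiber

/-- Key estimate in the Frankl–Rödl product theorem: if `W ⊆ V₁ × V₂ ⊂ ℝ^{n₁+n₂}`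
contains no isometric copy of `N₁ × N₂`, then
`|W| ≤ |V₁| · α(V₂, N₂) + α(V₁, N₁) · |V₂|^m` where `m = |N₂|`. -/
theorem frankl_rodl_product_estimate {d₁ d₂ n₁ n₂ : ℕ}
    (N₁ : Finset (EuclideanSpace ℝ (Fin d₁))) (N₂ : Finset (EuclideanSpace ℝ (Fin d₂)))
    (V₁ : Finset (EuclideanSpace ℝ (Fin n₁))) (V₂ : Finset (EuclideanSpace ℝ (Fin n₂)))
    (W : Finset (EuclideanSpace ℝ (Fin (n₁ + n₂))))
    (hW : (W : Set (EuclideanSpace ℝ (Fin (n₁ + n₂)))) ⊆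
      Set.image2 prodPoint (V₁ : Set (EuclideanSpace ℝ (Fin n₁))) (V₂ : Set (EuclideanSpace ℝ (Fin n₂))))
    (hno : ¬ ∃ M' ⊆ (W : Set (EuclideanSpace ℝ (Fin (n₁ + n₂)))),
      IsIsomCopy (Set.image2 prodPoint (N₁ : Set (EuclideanSpace ℝ (Fin d₁))) (N₂ : Set (EuclideanSpace ℝ (Fin d₂)))) M') :
    W.card ≤ V₁.card * alphaM V₂ (N₂ : Set (EuclideanSpace ℝ (Fin d₂))) + alphaM V₁ (N₁ : Set (EuclideanSpace ℝ (Fin d₁))) * V₂.card ^ N₂.card := by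
  have hN₂ : N₂.Nonempty := by
    rw [Finset.nonempty_iff_ne_empty]
    rintro rfl
    exact hno ⟨∅, Set.empty_subset _, by simpa using isIsomCopy_empty⟩
  calc W.card ≤ ∑ v₁ ∈ V₁, (fiber W V₂ v₁).card := card_le_sum_card_fiber hW
    _ ≤ ∑ v₁ ∈ V₁, (alphaM V₂ (N₂ : Set (E d₂)) + (copyMaps N₂ (fiber W V₂ v₁)).card) :=
        Finset.sum_le_sum fun v₁ _ => card_le_alphaM_add_card_copyMaps hN₂ (fiber_subset v₁)
    _ = V₁.card * alphaM V₂ (N₂ : Set (E d₂)) + ∑ v₁ ∈ V₁, (copyMaps N₂ (fiber W V₂ v₁)).card := by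
        rw [Finset.sum_add_distrib, Finset.sum_const, smul_eq_mul]
    _ ≤ _ := by
        gcongr
        exact sum_card_copyMaps_fiber_le hno
end
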